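/- Let A be a nonsingular n×n real matrix and H an n×n real matrix, and let 1 ≤ k ≤ n. Suppose the k×n block A_{k,n} of the first k rows of A has compact SVD A_{k,n} = S Σ T^T with Σ invertible k×k diagonal. Then (AH)_{k,k} = S Σ (T^T H_{n,k}) where H_{n,k} is the n×k block of the first k columns of H, and if G := T^T H_{n,k} is invertible, then the spectral norm of ((AH)_{k,k})^{-1} satisfies ||((AH)_{k,k})^{-1}|| ≤ ||G^{-1}|| · ||A_{k,n}^+|| ≤ ||G^{-1}|| · ||A^{-1}||. -/

import Mathlib

/-!
With `P` the matrix of the first `k` rows of the identity, `A_{k,n} = P A`, so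
`(AH)_{k,k} = A_{k,n} H_{n,k} = S Σ G` and `((AH)_{k,k})⁻¹ = G⁻¹ Σ⁻¹ Sᵀ = G⁻¹ Tᵀ A_{k,n}⁺`;
since `Tᵀ` is a contraction this is the first bound. For the second, `S Σ Tᵀ A⁻¹ = P A A⁻¹ = P`
gives `Σ⁻¹ Sᵀ = Tᵀ A⁻¹ Pᵀ`, hence `A_{k,n}⁺ = T Tᵀ A⁻¹ Pᵀ`, and `T`, `Tᵀ`, `Pᵀ` are contractions.
-/

open Matrix

/-- The `k×k` leading principal submatrix of an `n×n` matrix. -/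
def lead {F : Type*} {n : ℕ} (A : Matrix (Fin n) (Fin n) F) (k : ℕ) (hk : k ≤ n) :
    Matrix (Fin k) (Fin k) F :=
  A.submatrix (Fin.castLE hk) (Fin.castLE hk)

/-- The spectral norm (largest singular value) of a real matrix. -/
noncomputable def specNorm {m n : Type*} [Fintype m] [Fintype n] [DecidableEq n]
    (W : Matrix m n ℝ) : ℝ :=
  ‖LinearMap.toContinuousLinearMap (Matrix.toEuclideanLin W)‖

open scoped Matrix.Norms.L2Operator

lemma specNorm_eq_l2_opNorm {m n : Type*} [Fintype m] [Fintype n] [DecidableEq n]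
    (W : Matrix m n ℝ) : specNorm W = ‖W‖ :=
  rfl

namespace Matrix

variable {ι κ R : Type*} [CommRing R]

lemma one_submatrix_id_mul [Fintype ι] [DecidableEq ι] (e : κ → ι) (A : Matrix ι ι R) :
    (1 : Matrix ι ι R).submatrix e id * A = A.submatrix e id := by
  rw [← submatrix_id_id A, ← submatrix_mul _ _ _ _ _ Function.bijective_id, Matrix.one_mul,
    submatrix_id_id]

lemma one_submatrix_mul_transpose_self [Fintype ι] [DecidableEq ι] [DecidableEq κ] {e : κ → ι}
    (he : Function.Injective e) :
    (1 : Matrix ι ι R).submatrix e id * ((1 : Matrix ι ι R).submatrix e id)ᵀ = 1 := by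
  rw [transpose_submatrix, transpose_one, ← submatrix_mul _ _ _ _ _ Function.bijective_id,
    Matrix.one_mul, submatrix_one _ he]

lemma inv_diagonal_of_ne_zero [Fintype κ] [DecidableEq κ] {K : Type*} [Field K] {σ : κ → K}
    (hσ : ∀ i, σ i ≠ 0) : (diagonal σ)⁻¹ = diagonal fun i => (σ i)⁻¹ := by
  refine inv_eq_left_inv ?_
  rw [diagonal_mul_diagonal, ← diagonal_one]
  exact congrArg diagonal (funext fun i => inv_mul_cancel₀ (hσ i))

lemma inv_mul_transpose_eq_of_mul_eq [Fintype ι] [DecidableEq ι] [Fintype κ] [DecidableEq κ]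
    {A : Matrix ι ι R} (hA : IsUnit A.det) {P : Matrix κ ι R} (hP : P * Pᵀ = 1)
    {S D : Matrix κ κ R} {T : Matrix ι κ R} (hS : Sᵀ * S = 1) (hD : IsUnit D.det)
    (hPA : P * A = S * D * Tᵀ) :
    D⁻¹ * Sᵀ = Tᵀ * A⁻¹ * Pᵀ := by
  have hT : D⁻¹ * Sᵀ * S * D * Tᵀ = Tᵀ := by
    rw [Matrix.mul_assoc D⁻¹, hS, Matrix.mul_one, nonsing_inv_mul _ hD, Matrix.one_mul]
  calc D⁻¹ * Sᵀ = D⁻¹ * Sᵀ * (P * A * A⁻¹ * Pᵀ) := by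
        rw [mul_nonsing_inv_cancel_right _ _ hA, hP, Matrix.mul_one]
    _ = Tᵀ * A⁻¹ * Pᵀ := by
        simp only [hPA, ← Matrix.mul_assoc, hT]

lemma inv_mul_mul_eq_inv_mul_pinv [Fintype ι] [Fintype κ] [DecidableEq κ] {S D G : Matrix κ κ R}
    {T : Matrix ι κ R} (hS : Sᵀ * S = 1) (hT : Tᵀ * T = 1) :
    (S * D * G)⁻¹ = G⁻¹ * Tᵀ * (T * D⁻¹ * Sᵀ) := by
  rw [Matrix.mul_inv_rev, Matrix.mul_inv_rev, inv_eq_left_inv hS, Matrix.mul_assoc G⁻¹,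
    Matrix.mul_assoc T, ← Matrix.mul_assoc Tᵀ, hT, Matrix.one_mul]

lemma l2_opNorm_one_le [Fintype ι] [DecidableEq ι] : ‖(1 : Matrix ι ι ℝ)‖ ≤ 1 := by
  rw [cstar_norm_def, map_one]
  exact ContinuousLinearMap.norm_id_le

lemma l2_opNorm_transpose [Fintype ι] [DecidableEq ι] [Fintype κ] [DecidableEq κ]
    (M : Matrix ι κ ℝ) : ‖Mᵀ‖ = ‖M‖ := by
  rw [← conjTranspose_eq_transpose_of_trivial, l2_opNorm_conjTranspose]

lemma l2_opNorm_le_one_of_transpose_mul_self_eq_one [Fintype ι] [Fintype κ] [DecidableEq κ]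
    {M : Matrix ι κ ℝ} (h : Mᵀ * M = 1) : ‖M‖ ≤ 1 := by
  have hM := l2_opNorm_conjTranspose_mul_self M
  rw [conjTranspose_eq_transpose_of_trivial, h] at hM
  nlinarith [l2_opNorm_one_le (ι := κ), norm_nonneg M]

lemma l2_opNorm_transpose_le_one_of_transpose_mul_self_eq_one [Fintype ι] [DecidableEq ι]
    [Fintype κ] [DecidableEq κ] {M : Matrix ι κ ℝ} (h : Mᵀ * M = 1) : ‖Mᵀ‖ ≤ 1 :=
  (l2_opNorm_transpose M).trans_le (l2_opNorm_le_one_of_transpose_mul_self_eq_one h)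

lemma l2_opNorm_inv_mul_mul_le [Fintype ι] [DecidableEq ι] [Fintype κ] [DecidableEq κ]
    {S D G : Matrix κ κ ℝ} {T : Matrix ι κ ℝ} (hS : Sᵀ * S = 1) (hT : Tᵀ * T = 1) :
    ‖(S * D * G)⁻¹‖ ≤ ‖G⁻¹‖ * ‖T * D⁻¹ * Sᵀ‖ := by
  calc ‖(S * D * G)⁻¹‖ ≤ ‖G⁻¹‖ * ‖Tᵀ‖ * ‖T * D⁻¹ * Sᵀ‖ := by
        rw [inv_mul_mul_eq_inv_mul_pinv hS hT]
        exact (l2_opNorm_mul _ _).trans (by gcongr; exact l2_opNorm_mul _ _)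
    _ ≤ ‖G⁻¹‖ * 1 * ‖T * D⁻¹ * Sᵀ‖ := by
        gcongr
        exact l2_opNorm_transpose_le_one_of_transpose_mul_self_eq_one hT
    _ = ‖G⁻¹‖ * ‖T * D⁻¹ * Sᵀ‖ := by rw [mul_one]

lemma l2_opNorm_pinv_le_l2_opNorm_inv [Fintype ι] [DecidableEq ι] [Fintype κ] [DecidableEq κ]
    {A : Matrix ι ι ℝ} (hA : IsUnit A.det) {P : Matrix κ ι ℝ} (hP : P * Pᵀ = 1)
    {S D : Matrix κ κ ℝ} {T : Matrix ι κ ℝ} (hS : Sᵀ * S = 1) (hD : IsUnit D.det)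
    (hT : Tᵀ * T = 1) (hPA : P * A = S * D * Tᵀ) :
    ‖T * D⁻¹ * Sᵀ‖ ≤ ‖A⁻¹‖ := by
  have hTn : ‖T‖ ≤ 1 := l2_opNorm_le_one_of_transpose_mul_self_eq_one hT
  have hTtn : ‖Tᵀ‖ ≤ 1 := l2_opNorm_transpose_le_one_of_transpose_mul_self_eq_one hT
  have hPn : ‖Pᵀ‖ ≤ 1 :=
    l2_opNorm_le_one_of_transpose_mul_self_eq_one (by rwa [transpose_transpose])
  calc ‖T * D⁻¹ * Sᵀ‖ = ‖T * Tᵀ * A⁻¹ * Pᵀ‖ := by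
        rw [Matrix.mul_assoc T, inv_mul_transpose_eq_of_mul_eq hA hP hS hD hPA]
        simp only [Matrix.mul_assoc]
    _ ≤ ‖T‖ * ‖Tᵀ‖ * ‖A⁻¹‖ * ‖Pᵀ‖ := by
        refine (l2_opNorm_mul _ _).trans ?_
        gcongr
        refine (l2_opNorm_mul _ _).trans ?_
        gcongr
        exact l2_opNorm_mul _ _
    _ ≤ 1 * 1 * ‖A⁻¹‖ * 1 := by gcongr
    _ = ‖A⁻¹‖ := by ring

end Matrix

theorem genp_one_sided_multiplier_norm_bound_general {n k : ℕ} (hk : k ≤ n)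
    (A H : Matrix (Fin n) (Fin n) ℝ) (hA : IsUnit A.det)
    (S : Matrix (Fin k) (Fin k) ℝ) (T : Matrix (Fin n) (Fin k) ℝ) (σ : Fin k → ℝ)
    (hσ : ∀ i, σ i ≠ 0) (hS : Sᵀ * S = 1) (hT : Tᵀ * T = 1)
    (hSVD : A.submatrix (Fin.castLE hk) id = S * Matrix.diagonal σ * Tᵀ) :
    lead (A * H) k hk =
      S * Matrix.diagonal σ * (Tᵀ * H.submatrix id (Fin.castLE hk)) ∧
    (IsUnit (Tᵀ * H.submatrix id (Fin.castLE hk)).det →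
      specNorm (lead (A * H) k hk)⁻¹ ≤
          specNorm (Tᵀ * H.submatrix id (Fin.castLE hk))⁻¹ *
            specNorm (T * Matrix.diagonal (fun i => (σ i)⁻¹) * Sᵀ) ∧
        specNorm (Tᵀ * H.submatrix id (Fin.castLE hk))⁻¹ *
            specNorm (T * Matrix.diagonal (fun i => (σ i)⁻¹) * Sᵀ) ≤
          specNorm (Tᵀ * H.submatrix id (Fin.castLE hk))⁻¹ * specNorm A⁻¹) := by
  have hlead : lead (A * H) k hk =
      S * diagonal σ * (Tᵀ * H.submatrix id (Fin.castLE hk)) := by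
    rw [lead, submatrix_mul _ _ _ id _ Function.bijective_id, hSVD, Matrix.mul_assoc]
  have hD : IsUnit (diagonal σ).det :=
    (isUnit_iff_isUnit_det _).mp (isUnit_diagonal.mpr (Pi.isUnit_iff.mpr fun i => (hσ i).isUnit))
  have hPA : (1 : Matrix (Fin n) (Fin n) ℝ).submatrix (Fin.castLE hk) id * A =
      S * diagonal σ * Tᵀ := by
    rw [one_submatrix_id_mul, hSVD]
  refine ⟨hlead, fun _ => ?_⟩
  simp only [specNorm_eq_l2_opNorm, hlead, ← inv_diagonal_of_ne_zero hσ]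
  exact ⟨l2_opNorm_inv_mul_mul_le hS hT, mul_le_mul_of_nonneg_left
    (l2_opNorm_pinv_le_l2_opNorm_inv hA
      (one_submatrix_mul_transpose_self (Fin.castLE_injective hk)) hS hD hT hPA) (norm_nonneg _)⟩

/-- Let `A` be a nonsingular `n×n` real matrix, `H` an `n×n` real matrix, `1 ≤ k ≤ n`.
Suppose the block `A_{k,n}` of the first `k` rows of `A` has compact SVD
`A_{k,n} = S Σ Tᵀ` with `Σ` an invertible `k×k` diagonal matrix.  Then
`(AH)_{k,k} = S Σ (Tᵀ H_{n,k})`, and if `G := Tᵀ H_{n,k}` is invertible, then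
`‖((AH)_{k,k})⁻¹‖ ≤ ‖G⁻¹‖ · ‖A_{k,n}⁺‖ ≤ ‖G⁻¹‖ · ‖A⁻¹‖`, where
`A_{k,n}⁺ = T Σ⁻¹ Sᵀ` is the Moore–Penrose pseudoinverse and `‖·‖` the spectral norm. -/
theorem genp_one_sided_multiplier_norm_bound {n k : ℕ} (hk1 : 1 ≤ k) (hk : k ≤ n)
    (A H : Matrix (Fin n) (Fin n) ℝ) (hA : IsUnit A.det)
    (S : Matrix (Fin k) (Fin k) ℝ) (T : Matrix (Fin n) (Fin k) ℝ) (σ : Fin k → ℝ)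
    (hσ : ∀ i, σ i ≠ 0) (hS : Sᵀ * S = 1) (hT : Tᵀ * T = 1)
    (hSVD : A.submatrix (Fin.castLE hk) id = S * Matrix.diagonal σ * Tᵀ) :
    lead (A * H) k hk =
      S * Matrix.diagonal σ * (Tᵀ * H.submatrix id (Fin.castLE hk)) ∧
    (IsUnit (Tᵀ * H.submatrix id (Fin.castLE hk)).det →
      specNorm (lead (A * H) k hk)⁻¹ ≤
          specNorm (Tᵀ * H.submatrix id (Fin.castLE hk))⁻¹ *
            specNorm (T * Matrix.diagonal (fun i => (σ i)⁻¹) * Sᵀ) ∧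
        specNorm (Tᵀ * H.submatrix id (Fin.castLE hk))⁻¹ *
            specNorm (T * Matrix.diagonal (fun i => (σ i)⁻¹) * Sᵀ) ≤
          specNorm (Tᵀ * H.submatrix id (Fin.castLE hk))⁻¹ * specNorm A⁻¹) :=
  genp_one_sided_multiplier_norm_bound_general hk A H hA S T σ hσ hS hT hSVD
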